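/- arXiv:2407.10158 — 2 statements merged into one kernel-verified Lean document; each statement's English description precedes it below -/
import Mathlib

section
/- Let m, n be positive integers and h a norm on ℝ^m with generated norm H on ℝ^{m×n}. Then H(θ ⊗ e) = h(θ) for every θ ∈ ℝ^m and every unit vector e ∈ ℝ^n, and moreover H is the largest convex function with this property: if G : ℝ^{m×n} → ℝ is convex and satisfies G(θ ⊗ e) = h(θ) for all θ ∈ ℝ^m and all unit vectors e ∈ ℝ^n, then G(M) ≤ H(M) for all M ∈ ℝ^{m×n}. -/
open MeasureTheory

noncomputable section

/-- `ℝ^n` with the Euclidean norm. -/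
abbrev Euc (n : ℕ) := EuclideanSpace ℝ (Fin n)

/-- `h` is a norm on `ℝ^m`. -/
def IsNorm {m : ℕ} (h : (Fin m → ℝ) → ℝ) : Prop :=
  (∀ x y, h (x + y) ≤ h x + h y) ∧ (∀ (c : ℝ) (x), h (c • x) = |c| * h x) ∧
    ∀ x, h x = 0 → x = 0

/-- The dual norm `h_*` of `h`: `h_*(g) = sup { g·θ : h θ ≤ 1 }`. -/
def dualNorm {m : ℕ} (h : (Fin m → ℝ) → ℝ) (g : Fin m → ℝ) : ℝ :=
  sSup {r | ∃ θ : Fin m → ℝ, h θ ≤ 1 ∧ r = ∑ i, g i * θ i}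

/-- Matrix-vector product `M u`. -/
def matVec {m n : ℕ} (M : Fin m → Fin n → ℝ) (u : Euc n) : Fin m → ℝ :=
  fun i => ∑ j, M i j * u j

/-- Frobenius inner product `M : N`. -/
def frob {m n : ℕ} (M N : Fin m → Fin n → ℝ) : ℝ := ∑ i, ∑ j, M i j * N i j

/-- `M ∈ ∂H(0)`, i.e. `h_*(M u) ≤ 1` for all `|u| ≤ 1`. -/
def inSubdiffH {m n : ℕ} (h : (Fin m → ℝ) → ℝ) (M : Fin m → Fin n → ℝ) : Prop :=
  ∀ u : Euc n, ‖u‖ ≤ 1 → dualNorm h (matVec M u) ≤ 1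

/-- The norm `H` on `ℝ^{m×n}` generated by `h`:
`H(N) = sup { M:N : M ∈ ∂H(0) }`. -/
def genNorm {m n : ℕ} (h : (Fin m → ℝ) → ℝ) (N : Fin m → Fin n → ℝ) : ℝ :=
  sSup {r | ∃ M : Fin m → Fin n → ℝ, inSubdiffH h M ∧ r = frob M N}

/-- The rank-one matrix `θ ⊗ e`. -/
def outer {m n : ℕ} (θ : Fin m → ℝ) (e : Euc n) : Fin m → Fin n → ℝ :=
  fun i j => θ i * e j

/-!
Let `F = projNorm h` be the projective tensor norm of `h` and the Euclidean norm: `F(M)` is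
the infimum of `∑ h(θᵢ)` over decompositions `M = ∑ θᵢ ⊗ eᵢ` with unit vectors `eᵢ`. A
matrix of `∂H(0)` pairs with `θ ⊗ e` to at most `h(θ)`, so `H ≤ F`. Conversely `F` is
sublinear, and a Hahn–Banach functional dominated by `F` and attaining `F(M)` is a matrix of
`∂H(0)`, so `H = F`. The trivial decomposition gives `H(θ ⊗ e) ≤ h(θ)`, while a supporting
functional `g` of `h` at `θ` gives `g ⊗ e ∈ ∂H(0)`, pairing with `θ ⊗ e` to `h(θ)`. Finally,
for a convex `G` with `G(θ ⊗ e) = h(θ)`, Jensen's inequality on a decomposition with weights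
`h(θᵢ) / ∑ⱼ h(θⱼ)` gives `G(M) ≤ ∑ h(θᵢ)`, hence `G ≤ F = H`.
-/

open Matrix

theorem exists_linearMap_eq_le_of_sublinear {E : Type*} [AddCommGroup E] [Module ℝ E]
    {p : E → ℝ} (hp_smul : ∀ c : ℝ, 0 < c → ∀ x, p (c • x) = c * p x)
    (hp_add : ∀ x y, p (x + y) ≤ p x + p y) (x : E) :
    ∃ ℓ : E →ₗ[ℝ] ℝ, ℓ x = p x ∧ ∀ y, ℓ y ≤ p y := by
  have hp_zero : p 0 = 0 := by
    have := hp_smul 2 two_pos 0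
    rw [smul_zero] at this
    linarith
  have hp_neg (y : E) : -p y ≤ p (-y) := by
    have := hp_add y (-y)
    rw [add_neg_cancel, hp_zero] at this
    linarith
  have hx : ∀ c : ℝ, c • x = 0 → c • p x = 0 := fun c hc => by
    rcases smul_eq_zero.1 hc with rfl | rfl <;> simp [hp_zero]
  obtain ⟨ℓ, hℓ_ext, hℓ_le⟩ :=
    exists_extension_of_le_sublinear (LinearPMap.mkSpanSingleton' x (p x) hx) p hp_smul hp_add
      (by
        rintro ⟨y, hy⟩
        obtain ⟨c, rfl⟩ := Submodule.mem_span_singleton.1 hy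
        rw [LinearPMap.mkSpanSingleton'_apply, smul_eq_mul, RingHom.id_apply]
        rcases lt_trichotomy c 0 with hc | rfl | hc
        · have := hp_smul (-c) (neg_pos.2 hc) (-x)
          rw [neg_smul_neg] at this
          change c * p x ≤ p (c • x)
          nlinarith [hp_neg x]
        · simp [hp_zero]
        · exact (hp_smul c hc x).ge)
  exact ⟨ℓ, (hℓ_ext ⟨x, Submodule.mem_span_singleton_self x⟩).trans
    (LinearPMap.mkSpanSingleton'_apply_self _ _ _ _), hℓ_le⟩

theorem LinearMap.exists_dotProduct_eq {ι : Type*} [Fintype ι] [DecidableEq ι]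
    (ℓ : (ι → ℝ) →ₗ[ℝ] ℝ) : ∃ g : ι → ℝ, ∀ θ, ℓ θ = g ⬝ᵥ θ :=
  ⟨(dotProductEquiv ℝ ι).symm ℓ, fun θ =>
    (LinearMap.congr_fun ((dotProductEquiv ℝ ι).apply_symm_apply ℓ) θ).symm⟩

theorem Seminorm.continuous_of_finiteDimensional {E : Type*} [NormedAddCommGroup E]
    [NormedSpace ℝ E] [FiniteDimensional ℝ E] (p : Seminorm ℝ E) : Continuous p :=
  continuousOn_univ.1 (p.convexOn.continuousOn isOpen_univ)

theorem Seminorm.exists_pos_mul_norm_le {E : Type*} [NormedAddCommGroup E] [NormedSpace ℝ E]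
    [FiniteDimensional ℝ E] (p : Seminorm ℝ E) (hp : ∀ x, p x = 0 → x = 0) :
    ∃ c > 0, ∀ x, c * ‖x‖ ≤ p x := by
  obtain ⟨c, hc, hc_le⟩ := (isCompact_sphere (0 : E) 1).exists_forall_le'
    p.continuous_of_finiteDimensional.continuousOn (a := 0) fun x hx =>
      (apply_nonneg p x).lt_of_ne' fun h0 => by simp [hp x h0] at hx
  refine ⟨c, hc, fun x => ?_⟩
  rcases eq_or_ne x 0 with rfl | hx
  · simp
  · have hx' : 0 < ‖x‖ := norm_pos_iff.2 hx
    have := hc_le (‖x‖⁻¹ • x) (by simp [norm_smul, hx'.ne'])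
    rw [map_smul_eq_mul, norm_inv, norm_norm, le_inv_mul_iff₀ hx'] at this
    linarith

theorem ConvexOn.map_sum_smul_le {E ι : Type*} [AddCommGroup E] [Module ℝ E] {G : E → ℝ}
    (hG : ConvexOn ℝ Set.univ G) (hG0 : G 0 ≤ 0) {s : Finset ι} {c : ι → ℝ} {y : ι → E}
    (hc : ∀ i ∈ s, 0 ≤ c i) (hy : ∀ i ∈ s, ∀ t, 0 ≤ t → G (t • y i) ≤ t) :
    G (∑ i ∈ s, c i • y i) ≤ ∑ i ∈ s, c i := by
  set S := ∑ i ∈ s, c i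
  rcases (Finset.sum_nonneg hc).eq_or_lt with hS | hS
  · have hc0 : ∀ i ∈ s, c i = 0 := (Finset.sum_eq_zero_iff_of_nonneg hc).1 hS.symm
    rw [Finset.sum_eq_zero fun i hi => by rw [hc0 i hi, zero_smul]]
    exact hG0.trans hS.le
  -- Jensen's inequality with weights `c i / S` at the points `S • y i`
  have hw : ∀ i ∈ s, 0 ≤ c i / S := fun i hi => div_nonneg (hc i hi) hS.le
  calc G (∑ i ∈ s, c i • y i) = G (∑ i ∈ s, (c i / S) • S • y i) := by
        refine congrArg G (Finset.sum_congr rfl fun i _ => ?_)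
        rw [smul_smul, div_mul_cancel₀ _ hS.ne']
    _ ≤ ∑ i ∈ s, (c i / S) • G (S • y i) :=
        hG.map_sum_le hw (by rw [← Finset.sum_div, div_self hS.ne']) fun _ _ => Set.mem_univ _
    _ ≤ ∑ i ∈ s, c i / S * S :=
        Finset.sum_le_sum fun i hi => mul_le_mul_of_nonneg_left (hy i hi S hS.le) (hw i hi)
    _ = S := Finset.sum_congr rfl fun i _ => div_mul_cancel₀ _ hS.ne'

namespace IsNorm

variable {m : ℕ} {h : (Fin m → ℝ) → ℝ}

def toSeminorm (hh : IsNorm h) : Seminorm ℝ (Fin m → ℝ) :=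
  Seminorm.of h hh.1 fun c x => by rw [hh.2.1, Real.norm_eq_abs]

theorem nonneg (hh : IsNorm h) (x : Fin m → ℝ) : 0 ≤ h x :=
  apply_nonneg hh.toSeminorm x

theorem map_zero (hh : IsNorm h) : h 0 = 0 :=
  _root_.map_zero hh.toSeminorm

theorem map_smul_of_nonneg (hh : IsNorm h) {c : ℝ} (hc : 0 ≤ c) (x : Fin m → ℝ) :
    h (c • x) = c * h x := by
  rw [hh.2.1, abs_of_nonneg hc]

theorem map_inv_smul_self_le_one (hh : IsNorm h) (x : Fin m → ℝ) : h ((h x)⁻¹ • x) ≤ 1 := by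
  rw [hh.map_smul_of_nonneg (inv_nonneg.2 (hh.nonneg x))]
  exact inv_mul_le_one_of_le₀ le_rfl (hh.nonneg x)

theorem smul_inv_smul_self (hh : IsNorm h) (x : Fin m → ℝ) : h x • (h x)⁻¹ • x = x := by
  rcases (hh.nonneg x).eq_or_lt with hx | hx
  · simp [hh.2.2 x hx.symm]
  · exact smul_inv_smul₀ hx.ne' x

theorem isCompact_unitBall (hh : IsNorm h) : IsCompact {θ | h θ ≤ 1} := by
  obtain ⟨c, hc, hch⟩ := hh.toSeminorm.exists_pos_mul_norm_le hh.2.2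
  refine Metric.isCompact_of_isClosed_isBounded
    (isClosed_le hh.toSeminorm.continuous_of_finiteDimensional continuous_const)
    ((Metric.isBounded_closedBall (x := 0) (r := c⁻¹)).subset fun θ hθ => ?_)
  rw [mem_closedBall_zero_iff, ← mul_one c⁻¹, le_inv_mul_iff₀ hc]
  exact (hch θ).trans hθ

theorem bddAbove_dualNorm_set (hh : IsNorm h) (g : Fin m → ℝ) :
    BddAbove {r | ∃ θ : Fin m → ℝ, h θ ≤ 1 ∧ r = ∑ i, g i * θ i} :=
  (hh.isCompact_unitBall.bddAbove_image
    (continuous_const.dotProduct continuous_id).continuousOn).mono <| by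
      rintro _ ⟨θ, hθ, rfl⟩
      exact ⟨θ, hθ, rfl⟩

theorem dotProduct_le_dualNorm_mul (hh : IsNorm h) (g θ : Fin m → ℝ) :
    g ⬝ᵥ θ ≤ dualNorm h g * h θ := by
  rcases (hh.nonneg θ).eq_or_lt with hθ | hθ
  · simp [hh.2.2 θ hθ.symm, hh.map_zero]
  have : g ⬝ᵥ ((h θ)⁻¹ • θ) ≤ dualNorm h g :=
    le_csSup (hh.bddAbove_dualNorm_set g) ⟨_, hh.map_inv_smul_self_le_one θ, rfl⟩
  rwa [dotProduct_smul, smul_eq_mul, inv_mul_le_iff₀ hθ, mul_comm] at this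

theorem dualNorm_le_one (hh : IsNorm h) {g : Fin m → ℝ} (hg : ∀ θ, g ⬝ᵥ θ ≤ h θ) :
    dualNorm h g ≤ 1 :=
  csSup_le ⟨0, 0, by simp [hh.map_zero]⟩ fun _ ⟨θ, hθ, hr⟩ => hr ▸ (hg θ).trans hθ

theorem exists_dotProduct_eq_le (hh : IsNorm h) (θ₀ : Fin m → ℝ) :
    ∃ g : Fin m → ℝ, g ⬝ᵥ θ₀ = h θ₀ ∧ ∀ θ, g ⬝ᵥ θ ≤ h θ := by
  obtain ⟨ℓ, hℓθ₀, hℓ⟩ := exists_linearMap_eq_le_of_sublinear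
    (fun c hc => hh.map_smul_of_nonneg hc.le) hh.1 θ₀
  obtain ⟨g, hg⟩ := ℓ.exists_dotProduct_eq
  exact ⟨g, hg θ₀ ▸ hℓθ₀, fun θ => hg θ ▸ hℓ θ⟩

end IsNorm

section Matrices

variable {m n : ℕ}

theorem frob_sum {ι : Type*} (A : Fin m → Fin n → ℝ) (s : Finset ι)
    (N : ι → Fin m → Fin n → ℝ) : frob A (∑ k ∈ s, N k) = ∑ k ∈ s, frob A (N k) := by
  simp only [frob, Finset.sum_apply, Finset.mul_sum]
  conv_rhs => rw [Finset.sum_comm]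
  exact Finset.sum_congr rfl fun i _ => Finset.sum_comm

theorem frob_outer (A : Fin m → Fin n → ℝ) (θ : Fin m → ℝ) (u : Euc n) :
    frob A (outer θ u) = matVec A u ⬝ᵥ θ := by
  simp only [frob, outer, matVec, dotProduct, Finset.sum_mul]
  exact Finset.sum_congr rfl fun i _ => Finset.sum_congr rfl fun j _ => by ring

theorem matVec_outer (g : Fin m → ℝ) (e u : Euc n) : matVec (outer g e) u = inner ℝ e u • g := by
  ext i
  simp [matVec, outer, PiLp.inner_apply, Finset.mul_sum, mul_comm, mul_assoc]

theorem outer_smul (c : ℝ) (θ : Fin m → ℝ) (e : Euc n) : outer (c • θ) e = c • outer θ e := by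
  ext i j
  simp [outer, mul_assoc]

@[simp]
theorem outer_zero_left (e : Euc n) : outer (0 : Fin m → ℝ) e = 0 := by
  ext i j
  simp [outer]

@[simp]
theorem outer_zero_right (θ : Fin m → ℝ) : outer θ (0 : Euc n) = 0 := by
  ext i j
  simp [outer]

theorem sum_outer_single (M : Fin m → Fin n → ℝ) :
    ∑ j, outer (fun i => M i j) (EuclideanSpace.single j 1) = M := by
  ext i j
  simp [outer, Finset.sum_apply]

theorem LinearMap.exists_frob_eq (ℓ : (Fin m → Fin n → ℝ) →ₗ[ℝ] ℝ) :
    ∃ A : Fin m → Fin n → ℝ, ∀ N, ℓ N = frob A N := by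
  choose A hA using fun i => (ℓ ∘ₗ LinearMap.single ℝ (fun _ => Fin n → ℝ) i).exists_dotProduct_eq
  refine ⟨A, fun N => ?_⟩
  conv_lhs => rw [← Finset.univ_sum_single N]
  simp only [map_sum]
  exact Finset.sum_congr rfl fun i _ => hA i (N i)

end Matrices

def rankOneCosts {m n : ℕ} (h : (Fin m → ℝ) → ℝ) (M : Fin m → Fin n → ℝ) : Set ℝ :=
  {r | ∃ (k : ℕ) (θ : Fin k → Fin m → ℝ) (e : Fin k → Euc n),
    (∀ i, ‖e i‖ = 1) ∧ ∑ i, outer (θ i) (e i) = M ∧ ∑ i, h (θ i) = r}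

def projNorm {m n : ℕ} (h : (Fin m → ℝ) → ℝ) (M : Fin m → Fin n → ℝ) : ℝ :=
  sInf (rankOneCosts h M)

section ProjNorm

variable {m n : ℕ} {h : (Fin m → ℝ) → ℝ}

theorem rankOneCosts_nonempty (M : Fin m → Fin n → ℝ) : (rankOneCosts h M).Nonempty :=
  ⟨_, n, fun j i => M i j, fun j => EuclideanSpace.single j 1, fun j => by simp,
    sum_outer_single M, rfl⟩

theorem rankOneCosts_bddBelow (hh : IsNorm h) (M : Fin m → Fin n → ℝ) :
    BddBelow (rankOneCosts h M) := by
  refine ⟨0, ?_⟩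
  rintro _ ⟨k, θ, e, -, -, rfl⟩
  exact Finset.sum_nonneg fun i _ => hh.nonneg (θ i)

theorem smul_mem_rankOneCosts (hh : IsNorm h) {c r : ℝ} (hc : 0 ≤ c)
    {M : Fin m → Fin n → ℝ} (hr : r ∈ rankOneCosts h M) : c * r ∈ rankOneCosts h (c • M) := by
  obtain ⟨k, θ, e, he, rfl, rfl⟩ := hr
  refine ⟨k, fun i => c • θ i, e, he, ?_, ?_⟩
  · simp [outer_smul, Finset.smul_sum]
  · simp [hh.map_smul_of_nonneg hc, Finset.mul_sum]

theorem add_mem_rankOneCosts {r s : ℝ} {M N : Fin m → Fin n → ℝ} (hr : r ∈ rankOneCosts h M)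
    (hs : s ∈ rankOneCosts h N) : r + s ∈ rankOneCosts h (M + N) := by
  obtain ⟨k, θ, e, he, rfl, rfl⟩ := hr
  obtain ⟨l, θ', e', he', rfl, rfl⟩ := hs
  refine ⟨k + l, Fin.append θ θ', Fin.append e e',
    Fin.addCases (by simpa using he) (by simpa using he'), ?_, ?_⟩ <;>
    simp [Fin.sum_univ_add]

theorem projNorm_le (hh : IsNorm h) {M : Fin m → Fin n → ℝ} {r : ℝ}
    (hr : r ∈ rankOneCosts h M) : projNorm h M ≤ r :=
  csInf_le (rankOneCosts_bddBelow hh M) hr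

theorem projNorm_smul_le (hh : IsNorm h) {c : ℝ} (hc : 0 ≤ c) (M : Fin m → Fin n → ℝ) :
    projNorm h (c • M) ≤ c * projNorm h M := by
  rw [projNorm, projNorm, ← smul_eq_mul, ← Real.sInf_smul_of_nonneg hc]
  refine csInf_le_csInf (rankOneCosts_bddBelow hh _) (rankOneCosts_nonempty M).smul_set ?_
  rintro _ ⟨r, hr, rfl⟩
  exact smul_mem_rankOneCosts hh hc hr

theorem projNorm_smul (hh : IsNorm h) {c : ℝ} (hc : 0 < c) (M : Fin m → Fin n → ℝ) :
    projNorm h (c • M) = c * projNorm h M := by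
  refine (projNorm_smul_le hh hc.le M).antisymm ?_
  have := projNorm_smul_le hh (inv_nonneg.2 hc.le) (c • M)
  rwa [inv_smul_smul₀ hc.ne', le_inv_mul_iff₀ hc] at this

theorem projNorm_add_le (hh : IsNorm h) (M N : Fin m → Fin n → ℝ) :
    projNorm h (M + N) ≤ projNorm h M + projNorm h N := by
  rw [projNorm, projNorm, projNorm, ← csInf_add (rankOneCosts_nonempty M)
    (rankOneCosts_bddBelow hh M) (rankOneCosts_nonempty N) (rankOneCosts_bddBelow hh N)]
  refine csInf_le_csInf (rankOneCosts_bddBelow hh _)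
    ((rankOneCosts_nonempty M).add (rankOneCosts_nonempty N)) ?_
  rintro _ ⟨r, hr, s, hs, rfl⟩
  exact add_mem_rankOneCosts hr hs

theorem projNorm_outer_le (hh : IsNorm h) (θ : Fin m → ℝ) (u : Euc n) :
    projNorm h (outer θ u) ≤ h θ * ‖u‖ := by
  rcases eq_or_ne u 0 with rfl | hu
  · refine projNorm_le hh ⟨0, Fin.elim0, Fin.elim0, fun i => i.elim0, ?_, ?_⟩ <;> simp
  have hu' : 0 < ‖u‖ := norm_pos_iff.2 hu
  refine projNorm_le hh ⟨1, fun _ => ‖u‖ • θ, fun _ => ‖u‖⁻¹ • u, fun _ => ?_, ?_, ?_⟩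
  · simp [norm_smul, hu'.ne']
  · ext i j
    simp [outer]
    field_simp
  · simp [hh.map_smul_of_nonneg hu'.le, mul_comm]

end ProjNorm

section GenNorm

variable {m n : ℕ} {h : (Fin m → ℝ) → ℝ}

theorem frob_outer_le (hh : IsNorm h) {A : Fin m → Fin n → ℝ} (hA : inSubdiffH h A)
    (θ : Fin m → ℝ) {u : Euc n} (hu : ‖u‖ ≤ 1) : frob A (outer θ u) ≤ h θ := by
  rw [frob_outer]
  calc matVec A u ⬝ᵥ θ ≤ dualNorm h (matVec A u) * h θ := hh.dotProduct_le_dualNorm_mul _ _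
    _ ≤ h θ := mul_le_of_le_one_left (hh.nonneg θ) (hA u hu)

theorem frob_le_projNorm (hh : IsNorm h) {A : Fin m → Fin n → ℝ} (hA : inSubdiffH h A)
    (M : Fin m → Fin n → ℝ) : frob A M ≤ projNorm h M := by
  refine le_csInf (rankOneCosts_nonempty M) ?_
  rintro _ ⟨k, θ, e, he, rfl, rfl⟩
  rw [frob_sum]
  exact Finset.sum_le_sum fun i _ => frob_outer_le hh hA (θ i) (he i).le

theorem zero_inSubdiffH (hh : IsNorm h) : inSubdiffH h (0 : Fin m → Fin n → ℝ) := fun _ _ =>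
  hh.dualNorm_le_one fun θ => by simpa [matVec, dotProduct] using hh.nonneg θ

theorem outer_inSubdiffH (hh : IsNorm h) {g : Fin m → ℝ} (hg : ∀ θ, g ⬝ᵥ θ ≤ h θ) {e : Euc n}
    (he : ‖e‖ ≤ 1) : inSubdiffH h (outer g e) := fun u hu => by
  refine hh.dualNorm_le_one fun θ => ?_
  have hc : |inner ℝ e u| ≤ 1 :=
    (abs_real_inner_le_norm e u).trans (mul_le_one₀ he (norm_nonneg u) hu)
  rw [matVec_outer, smul_dotProduct, smul_eq_mul, ← smul_eq_mul, ← dotProduct_smul]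
  calc g ⬝ᵥ (inner ℝ e u • θ) ≤ h (inner ℝ e u • θ) := hg _
    _ = |inner ℝ e u| * h θ := hh.2.1 _ _
    _ ≤ h θ := mul_le_of_le_one_left (hh.nonneg θ) hc

theorem bddAbove_genNorm_set (hh : IsNorm h) (M : Fin m → Fin n → ℝ) :
    BddAbove {r | ∃ A : Fin m → Fin n → ℝ, inSubdiffH h A ∧ r = frob A M} := by
  refine ⟨projNorm h M, ?_⟩
  rintro _ ⟨A, hA, rfl⟩
  exact frob_le_projNorm hh hA M

theorem frob_le_genNorm (hh : IsNorm h) {A : Fin m → Fin n → ℝ} (hA : inSubdiffH h A)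
    (M : Fin m → Fin n → ℝ) : frob A M ≤ genNorm h M :=
  le_csSup (bddAbove_genNorm_set hh M) ⟨A, hA, rfl⟩

theorem genNorm_le_projNorm (hh : IsNorm h) (M : Fin m → Fin n → ℝ) :
    genNorm h M ≤ projNorm h M := by
  refine csSup_le ⟨_, 0, zero_inSubdiffH hh, rfl⟩ ?_
  rintro _ ⟨A, hA, rfl⟩
  exact frob_le_projNorm hh hA M

theorem projNorm_le_genNorm (hh : IsNorm h) (M : Fin m → Fin n → ℝ) :
    projNorm h M ≤ genNorm h M := by
  obtain ⟨ℓ, hℓM, hℓ⟩ := exists_linearMap_eq_le_of_sublinear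
    (fun c hc => projNorm_smul hh hc) (projNorm_add_le hh) M
  obtain ⟨A, hA⟩ := ℓ.exists_frob_eq
  have hA_mem : inSubdiffH h A := fun u hu => hh.dualNorm_le_one fun θ => by
    calc matVec A u ⬝ᵥ θ = ℓ (outer θ u) := by rw [hA, frob_outer]
      _ ≤ projNorm h (outer θ u) := hℓ _
      _ ≤ h θ * ‖u‖ := projNorm_outer_le hh θ u
      _ ≤ h θ := mul_le_of_le_one_right (hh.nonneg θ) hu
  calc projNorm h M = frob A M := hℓM ▸ hA M
    _ ≤ genNorm h M := frob_le_genNorm hh hA_mem M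

theorem genNorm_eq_projNorm (hh : IsNorm h) (M : Fin m → Fin n → ℝ) :
    genNorm h M = projNorm h M :=
  (genNorm_le_projNorm hh M).antisymm (projNorm_le_genNorm hh M)

theorem genNorm_outer (hh : IsNorm h) (θ : Fin m → ℝ) {e : Euc n} (he : ‖e‖ = 1) :
    genNorm h (outer θ e) = h θ := by
  refine le_antisymm ?_ ?_
  · calc genNorm h (outer θ e) = projNorm h (outer θ e) := genNorm_eq_projNorm hh _
      _ ≤ h θ * ‖e‖ := projNorm_outer_le hh θ e
      _ = h θ := by rw [he, mul_one]
  · obtain ⟨g, hgθ, hg⟩ := hh.exists_dotProduct_eq_le θ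
    calc h θ = frob (outer g e) (outer θ e) := by
          rw [frob_outer, matVec_outer, real_inner_self_eq_norm_sq, he, one_pow, one_smul, hgθ]
      _ ≤ genNorm h (outer θ e) := frob_le_genNorm hh (outer_inSubdiffH hh hg he.le) _

theorem ConvexOn.le_projNorm (hh : IsNorm h) {G : (Fin m → Fin n → ℝ) → ℝ}
    (hG : ConvexOn ℝ Set.univ G) (hG0 : G 0 ≤ 0)
    (hGh : ∀ (θ : Fin m → ℝ) (e : Euc n), ‖e‖ = 1 → G (outer θ e) = h θ)
    (M : Fin m → Fin n → ℝ) : G M ≤ projNorm h M := by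
  refine le_csInf (rankOneCosts_nonempty M) ?_
  rintro _ ⟨k, θ, e, he, rfl, rfl⟩
  calc G (∑ i, outer (θ i) (e i)) = G (∑ i, h (θ i) • outer ((h (θ i))⁻¹ • θ i) (e i)) := by
        simp_rw [← outer_smul, hh.smul_inv_smul_self]
    _ ≤ ∑ i, h (θ i) := hG.map_sum_smul_le hG0 (fun i _ => hh.nonneg _) fun i _ t ht => by
        rw [← outer_smul, hGh _ _ (he i), hh.map_smul_of_nonneg ht]
        exact mul_le_of_le_one_right ht (hh.map_inv_smul_self_le_one _)

end GenNorm

theorem statement0_general {m n : ℕ} (hn : 0 < n)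
    (h : (Fin m → ℝ) → ℝ) (hh : IsNorm h) :
    (∀ (θ : Fin m → ℝ) (e : Euc n), ‖e‖ = 1 → genNorm h (outer θ e) = h θ) ∧
    ∀ G : (Fin m → Fin n → ℝ) → ℝ, ConvexOn ℝ Set.univ G →
      (∀ (θ : Fin m → ℝ) (e : Euc n), ‖e‖ = 1 → G (outer θ e) = h θ) →
      ∀ M : Fin m → Fin n → ℝ, G M ≤ genNorm h M := by
  refine ⟨fun θ e he => genNorm_outer hh θ he, fun G hG hGh M => ?_⟩
  have hG0 : G 0 = 0 := by
    simpa [hh.map_zero] using hGh 0 (EuclideanSpace.single ⟨0, hn⟩ 1) (by simp)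
  rw [genNorm_eq_projNorm hh]
  exact hG.le_projNorm hh hG0.le hGh M

/-- `H(θ ⊗ e) = h(θ)` for unit `e`, and `H` is the largest convex
function on `ℝ^{m×n}` with this property. -/
theorem statement0 {m n : ℕ} (hm : 0 < m) (hn : 0 < n)
    (h : (Fin m → ℝ) → ℝ) (hh : IsNorm h) :
    (∀ (θ : Fin m → ℝ) (e : Euc n), ‖e‖ = 1 → genNorm h (outer θ e) = h θ) ∧
    ∀ G : (Fin m → Fin n → ℝ) → ℝ, ConvexOn ℝ Set.univ G →
      (∀ (θ : Fin m → ℝ) (e : Euc n), ‖e‖ = 1 → G (outer θ e) = h θ) →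
      ∀ M : Fin m → Fin n → ℝ, G M ≤ genNorm h M :=
  statement0_general hn h hh
end
end

section
/- Let m = n = 2 and h(θ) = max{|θ_1|, |θ_2|, |θ_1 − θ_2|} for θ ∈ ℝ², with generated norm H on ℝ^{2×2}. Then H(I) = (1 + √3)/√2, where I ∈ ℝ^{2×2} is the identity matrix. -/
open MeasureTheory

noncomputable section

/-- The norm `h(θ) = max{|θ₁|, |θ₂|, |θ₁ - θ₂|}` on `ℝ²`. -/
def h2 : (Fin 2 → ℝ) → ℝ := fun θ => max (max |θ 0| |θ 1|) |θ 0 - θ 1|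

/-
The supremum defining `H(N)` runs over the matrices `M` for which `Mᵀθ` lies in the Euclidean unit
disc whenever `h θ ≤ 1`. Upper bound: taking `θ = e₁, e₂, e₁ + e₂` puts the rows `r₁, r₂` of `M` and
their sum `s` in the unit disc; with `t = r₁ - r₂` one has `tr M ≤ (|s| + |t|) / √2`, and
`|s| ≤ 1`, `|s|² + |t|² ≤ 4` give `|s| + |t| ≤ 1 + √3`. Lower bound: for
`M = [[p, -q], [-q, p]]` with `p = cos (π/12)`, `q = sin (π/12)` one gets
`|Mᵀθ|² = θ₁² + θ₂² - θ₁θ₂`, which is at most `1` on the hexagon `h ≤ 1` (the ellipse passes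
through its six vertices), and `tr M = 2p = (1 + √3) / √2`.
-/

open Matrix

section DualNorm

variable {m : ℕ} {h : (Fin m → ℝ) → ℝ}

lemma dualNorm_le {g : Fin m → ℝ} {c : ℝ} (hc : 0 ≤ c)
    (H : ∀ θ, h θ ≤ 1 → ∑ i, g i * θ i ≤ c) : dualNorm h g ≤ c :=
  Real.sSup_le (by rintro _ ⟨θ, hθ, rfl⟩; exact H θ hθ) hc

lemma le_dualNorm {g θ : Fin m → ℝ}
    (hb : BddAbove {r | ∃ θ : Fin m → ℝ, h θ ≤ 1 ∧ r = ∑ i, g i * θ i}) (hθ : h θ ≤ 1) :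
    ∑ i, g i * θ i ≤ dualNorm h g :=
  le_csSup hb ⟨θ, hθ, rfl⟩

end DualNorm

lemma norm_le_one_of_forall_inner_le_one {n : ℕ} (x : Euc n)
    (H : ∀ u : Euc n, ‖u‖ ≤ 1 → inner ℝ x u ≤ 1) : ‖x‖ ≤ 1 := by
  rcases eq_or_ne x 0 with rfl | hx
  · simp
  have hx' : 0 < ‖x‖ := norm_pos_iff.2 hx
  have := H (‖x‖⁻¹ • x) (by rw [norm_smul, norm_inv, norm_norm, inv_mul_cancel₀ hx'.ne'])
  rwa [inner_smul_right, real_inner_self_eq_norm_sq, sq, ← mul_assoc, inv_mul_cancel₀ hx'.ne',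
    one_mul] at this

lemma sum_matVec_mul_eq_inner {m n : ℕ} (M : Fin m → Fin n → ℝ) (u : Euc n) (θ : Fin m → ℝ) :
    ∑ i, matVec M u i * θ i = inner ℝ (WithLp.toLp 2 (θ ᵥ* M)) u := by
  rw [EuclideanSpace.inner_eq_star_dotProduct]
  simp only [matVec, vecMul, dotProduct, star_trivial, Finset.sum_mul, Finset.mul_sum]
  rw [Finset.sum_comm]
  exact Finset.sum_congr rfl fun _ _ => Finset.sum_congr rfl fun _ _ => by ring

theorem inSubdiffH_iff {m n : ℕ} {h : (Fin m → ℝ) → ℝ} {M : Fin m → Fin n → ℝ}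
    (hb : ∀ g : Fin m → ℝ, BddAbove {r | ∃ θ : Fin m → ℝ, h θ ≤ 1 ∧ r = ∑ i, g i * θ i}) :
    inSubdiffH h M ↔ ∀ θ, h θ ≤ 1 → ‖WithLp.toLp 2 (θ ᵥ* M)‖ ≤ 1 := by
  constructor
  · intro hM θ hθ
    refine norm_le_one_of_forall_inner_le_one _ fun u hu => ?_
    rw [← sum_matVec_mul_eq_inner]
    exact (le_dualNorm (hb _) hθ).trans (hM u hu)
  · intro H u hu
    refine dualNorm_le zero_le_one fun θ hθ => ?_
    rw [sum_matVec_mul_eq_inner]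
    calc inner ℝ (WithLp.toLp 2 (θ ᵥ* M)) u ≤ ‖WithLp.toLp 2 (θ ᵥ* M)‖ * ‖u‖ :=
        real_inner_le_norm _ _
      _ ≤ 1 := mul_le_one₀ (H θ hθ) (norm_nonneg _) hu

lemma norm_toLp_le_one_iff {n : ℕ} (v : Fin n → ℝ) :
    ‖(WithLp.toLp 2 v : Euc n)‖ ≤ 1 ↔ ∑ i, v i ^ 2 ≤ 1 := by
  simp [EuclideanSpace.norm_eq, Real.sqrt_le_one]

lemma h2_le_one_iff (θ : Fin 2 → ℝ) : h2 θ ≤ 1 ↔ |θ 0| ≤ 1 ∧ |θ 1| ≤ 1 ∧ |θ 0 - θ 1| ≤ 1 := by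
  simp only [h2, max_le_iff, and_assoc]

lemma bddAbove_h2_dual (g : Fin 2 → ℝ) :
    BddAbove {r | ∃ θ : Fin 2 → ℝ, h2 θ ≤ 1 ∧ r = ∑ i, g i * θ i} := by
  refine ⟨|g 0| + |g 1|, ?_⟩
  rintro _ ⟨θ, hθ, rfl⟩
  obtain ⟨h0, h1, -⟩ := (h2_le_one_iff θ).1 hθ
  calc ∑ i, g i * θ i ≤ |g 0| * |θ 0| + |g 1| * |θ 1| := by
        rw [Fin.sum_univ_two, ← abs_mul, ← abs_mul]
        exact add_le_add (le_abs_self _) (le_abs_self _)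
    _ ≤ |g 0| + |g 1| := add_le_add (mul_le_of_le_one_right (abs_nonneg _) h0)
        (mul_le_of_le_one_right (abs_nonneg _) h1)

lemma sq_add_sq_sub_mul_le_one_of_h2_le_one {θ : Fin 2 → ℝ} (hθ : h2 θ ≤ 1) :
    θ 0 ^ 2 + θ 1 ^ 2 - θ 0 * θ 1 ≤ 1 := by
  obtain ⟨h0, h1, h01⟩ := (h2_le_one_iff θ).1 hθ
  rw [abs_le] at h0 h1 h01
  -- `2 (1 - θ₀² - θ₁² + θ₀θ₁)` is the sum of two products of three alternate edge constraints.
  nlinarith [mul_nonneg (mul_nonneg (sub_nonneg.2 h0.2) (neg_le_iff_add_nonneg.1 h1.1))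
      (neg_le_iff_add_nonneg.1 h01.1),
    mul_nonneg (mul_nonneg (neg_le_iff_add_nonneg.1 h0.1) (sub_nonneg.2 h1.2)) (sub_nonneg.2 h01.2)]

lemma add_le_sqrt_two_mul_sqrt (x y : ℝ) : x + y ≤ √2 * √(x ^ 2 + y ^ 2) := by
  rw [← Real.sqrt_mul zero_le_two]
  exact (le_abs_self _).trans (Real.abs_le_sqrt (by nlinarith [sq_nonneg (x - y)]))

lemma add_le_one_add_sqrt_three {U W : ℝ} (hU : 0 ≤ U) (hU1 : U ≤ 1) (hW : 0 ≤ W)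
    (hUW : U ^ 2 + W ^ 2 ≤ 4) : U + W ≤ 1 + √3 := by
  have h3 : √3 ^ 2 = 3 := Real.sq_sqrt (by norm_num)
  have h31 : 1 ≤ √3 := Real.one_le_sqrt.2 (by norm_num)
  nlinarith [mul_nonneg (sub_nonneg.2 hU1) (sub_nonneg.2 (hU1.trans h31)),
    sq_nonneg (W - (1 + √3 - U))]

lemma add_le_of_rows_le_one {a b e d : ℝ} (h₀ : a ^ 2 + b ^ 2 ≤ 1) (h₁ : e ^ 2 + d ^ 2 ≤ 1)
    (h₂ : (a + e) ^ 2 + (b + d) ^ 2 ≤ 1) : a + d ≤ (1 + √3) / √2 := by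
  have hsum := add_le_sqrt_two_mul_sqrt (a + e) (b + d)
  have hdiff := add_le_sqrt_two_mul_sqrt (a - e) (d - b)
  have hbound := add_le_one_add_sqrt_three (Real.sqrt_nonneg _) (Real.sqrt_le_one.2 h₂)
    (Real.sqrt_nonneg ((a - e) ^ 2 + (d - b) ^ 2))
    (by rw [Real.sq_sqrt (by positivity), Real.sq_sqrt (by positivity)]; nlinarith)
  have htrace : 2 * (a + d) ≤ √2 * (1 + √3) := by nlinarith [Real.sqrt_nonneg 2]
  calc a + d ≤ √2 * (1 + √3) / 2 := by linarith
    _ = (1 + √3) / √2 := by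
      field_simp
      rw [Real.sq_sqrt zero_le_two]

lemma trace_le_of_inSubdiffH_h2 {M : Fin 2 → Fin 2 → ℝ} (hM : inSubdiffH h2 M) :
    M 0 0 + M 1 1 ≤ (1 + √3) / √2 := by
  have hrow : ∀ θ, h2 θ ≤ 1 → (θ ᵥ* M) 0 ^ 2 + (θ ᵥ* M) 1 ^ 2 ≤ 1 := fun θ hθ => by
    simpa [norm_toLp_le_one_iff, Fin.sum_univ_two] using
      (inSubdiffH_iff bddAbove_h2_dual).1 hM θ hθ
  have h₀ := hrow ![1, 0] (by simp [h2])
  have h₁ := hrow ![0, 1] (by simp [h2])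
  have h₂ := hrow ![1, 1] (by simp [h2])
  simp only [vecMul, dotProduct, Fin.sum_univ_two, cons_val_zero, cons_val_one, cons_val_fin_one,
    one_mul, zero_mul, add_zero, zero_add] at h₀ h₁ h₂
  exact add_le_of_rows_le_one h₀ h₁ h₂

lemma inSubdiffH_h2_of_sq_add_sq {p q : ℝ} (hpq : p ^ 2 + q ^ 2 = 1) (hpq' : 4 * (p * q) = 1) :
    inSubdiffH h2 ![![p, -q], ![-q, p]] := by
  refine (inSubdiffH_iff bddAbove_h2_dual).2 fun θ hθ => ?_
  rw [norm_toLp_le_one_iff]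
  simp only [vecMul, dotProduct, Fin.sum_univ_two, cons_val_zero, cons_val_one]
  linear_combination (θ 0 ^ 2 + θ 1 ^ 2) * hpq - θ 0 * θ 1 * hpq' +
    sq_add_sq_sub_mul_le_one_of_h2_le_one hθ

/-- for this `h`, the generated norm satisfies `H(I) = (1 + √3)/√2`. -/
theorem statement3 :
    genNorm h2 (fun i j => if i = j then (1 : ℝ) else 0) =
      (1 + Real.sqrt 3) / Real.sqrt 2 := by
  have hfrob (M : Fin 2 → Fin 2 → ℝ) :
      frob M (fun i j => if i = j then (1 : ℝ) else 0) = M 0 0 + M 1 1 := by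
    simp [frob, Fin.sum_univ_two]
  have hsqrt2 : √2 ^ 2 = 2 := Real.sq_sqrt zero_le_two
  have hsqrt3 : √3 ^ 2 = 3 := Real.sq_sqrt zero_le_three
  refine IsGreatest.csSup_eq ⟨⟨_, inSubdiffH_h2_of_sq_add_sq
    (p := (1 + √3) / (2 * √2)) (q := (√3 - 1) / (2 * √2)) ?_ ?_, ?_⟩, ?_⟩
  · field_simp
    linear_combination 2 * hsqrt3 - 4 * hsqrt2
  · field_simp
    linear_combination 4 * hsqrt3 - 4 * hsqrt2
  · rw [hfrob]
    simp only [cons_val_zero, cons_val_one, cons_val_fin_one]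
    field_simp
    ring
  · rintro _ ⟨M, hM, rfl⟩
    rw [hfrob]
    exact trace_le_of_inSubdiffH_h2 hM
end
end
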